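/- Let 0 < α < β and let F : Ω → [0,∞] be a Borel function. If x ∈ ∂Ω satisfies S^β F(x) < ∞ and S^α F(x) > λ for some λ > 0, then there exists ε > 0 such that S^α F(y) > λ for every y ∈ ∂Ω with |y − x| < ε. In particular, if S^β F(x) < ∞ for every x ∈ ∂Ω, then for every λ > 0 the set {x ∈ ∂Ω : S^α F(x) > λ} is relatively open in ∂Ω. -/

import Mathlib

/-!
`S^α F` is lower semicontinuous at each point `x` of `∂Ω`, by Fatou's lemma. As `y → x`, a point
`Y` of the open cone `Γ^α(x)` eventually lies in `Γ^α(y)`, and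
`limsup m(B(y, δ(Y)) ∩ Ω) ≤ m(B̄(x, δ(Y)) ∩ Ω)`, which is `m(B(x, δ(Y)) ∩ Ω)` unless the sphere
`∂B(x, δ(Y))` charges `Ω`. Only countably many spheres centred at `x` do, and each level set
`{δ = t}` is `m`-null: moving from `Y` towards `∂Ω` decreases `δ` on a whole ball of radius
comparable to any `r < δ(Y)`, which by doubling carries a fixed fraction of `m(B̄(Y, r) ∩ Ω)`,
so the level set has no density points.
-/

open Metric MeasureTheory Set
open scoped ENNReal

noncomputable section

/-- Distance to the boundary of `Ω`. -/
def bdist {n : ℕ} (Ω : Set (EuclideanSpace ℝ (Fin (n + 1))))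
    (X : EuclideanSpace ℝ (Fin (n + 1))) : ℝ :=
  Metric.infDist X (frontier Ω)

/-- The cone `Γ^α(x)` with vertex `x` and aperture `α`. -/
def cone {n : ℕ} (Ω : Set (EuclideanSpace ℝ (Fin (n + 1)))) (α : ℝ)
    (x : EuclideanSpace ℝ (Fin (n + 1))) : Set (EuclideanSpace ℝ (Fin (n + 1))) :=
  {Y | Y ∈ Ω ∧ dist Y x < (1 + α) * bdist Ω Y}

/-- The conical square function
`S^α F(x) = (∬_{Γ^α(x)} F(Y)² δ(Y)² dm(Y)/m(B(x,δ(Y)) ∩ Ω))^{1/2}`. -/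
def sqFn {n : ℕ} (Ω : Set (EuclideanSpace ℝ (Fin (n + 1))))
    (m : Measure (EuclideanSpace ℝ (Fin (n + 1)))) (α : ℝ)
    (F : EuclideanSpace ℝ (Fin (n + 1)) → ℝ≥0∞) (x : EuclideanSpace ℝ (Fin (n + 1))) :
    ℝ≥0∞ :=
  (∫⁻ Y in cone Ω α x,
      F Y ^ 2 * ENNReal.ofReal (bdist Ω Y) ^ 2 / m (ball x (bdist Ω Y) ∩ Ω) ∂m) ^ (2⁻¹ : ℝ)

open Filter
open scoped Topology

section Geometry

variable {E : Type*} [NormedAddCommGroup E] [NormedSpace ℝ E]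

theorem ball_infDist_frontier_subset [FiniteDimensional ℝ E] {s : Set E} {x : E} (hx : x ∈ s) :
    ball x (infDist x (frontier s)) ⊆ s := by
  rcases eq_or_ne s univ with rfl | hs
  · exact subset_univ _
  obtain ⟨y, hy, hxy⟩ := exists_mem_frontier_infDist_compl_eq_dist hx hs
  calc ball x (infDist x (frontier s)) ⊆ ball x (infDist x sᶜ) :=
        ball_subset_ball (hxy ▸ infDist_le_dist_of_mem hy)
    _ ⊆ s := ball_infDist_compl_subset

/-- The centre `z` is reached by moving `r / 2` from `y` towards a nearly closest point of `s`. -/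
theorem exists_forall_ball_infDist_lt {s : Set E} (hs : s.Nonempty) {y : E} {r : ℝ} (hr : 0 < r)
    (hry : r ≤ infDist y s) :
    ∃ z, dist z y = r / 2 ∧ ∀ w ∈ ball z (r / 8), infDist w s < infDist y s := by
  obtain ⟨p, hp, hyp⟩ :=
    (infDist_lt_iff hs).1 (lt_add_of_pos_right (infDist y s) (by positivity : 0 < r / 4))
  have hd : infDist y s ≤ dist y p := infDist_le_dist_of_mem hp
  set t := r / (2 * dist y p)
  have ht0 : 0 ≤ t := by positivity
  have ht1 : t ≤ 1 := by rw [div_le_one (by linarith)]; linarith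
  have htd : t * dist y p = r / 2 := by
    simp only [t]
    field_simp [(show 0 < dist y p by linarith).ne']
  refine ⟨AffineMap.lineMap y p t, ?_, fun w hw => ?_⟩
  · rw [dist_lineMap_left, Real.norm_of_nonneg ht0, htd]
  · have hzp : dist (AffineMap.lineMap y p t) p = dist y p - r / 2 := by
      rw [dist_lineMap_right, Real.norm_of_nonneg (by linarith), sub_mul, one_mul, htd]
    calc infDist w s ≤ infDist (AffineMap.lineMap y p t) s + dist w (AffineMap.lineMap y p t) :=
          infDist_le_infDist_add_dist
      _ < dist y p - r / 2 + r / 8 := by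
          exact add_lt_add_of_le_of_lt (hzp ▸ infDist_le_dist_of_mem hp) hw
      _ < infDist y s := by linarith
      
end Geometry

section Density

variable {β : Type*} [MetricSpace β] [MeasurableSpace β] [BorelSpace β] [SecondCountableTopology β]
  [HasBesicovitchCovering β]

theorem ENNReal.div_le_one_sub_inv_of_add_le {a b M C : ℝ≥0∞} (hM : M ≠ 0) (hM' : M ≠ ∞)
    (hab : a + b ≤ M) (hMb : M ≤ C * b) : a / M ≤ 1 - C⁻¹ := by
  have hC : C ≠ 0 := by rintro rfl; simp_all
  have hsum : a / M + b / M ≤ 1 := by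
    rw [ENNReal.div_add_div_same, ENNReal.div_le_iff hM hM', one_mul]
    exact hab
  have hCb : C⁻¹ ≤ b / M := by
    rw [ENNReal.le_div_iff_mul_le (Or.inl hM) (Or.inl hM'), mul_comm, ← div_eq_mul_inv]
    exact ENNReal.div_le_of_le_mul (mul_comm C b ▸ hMb)
  exact ENNReal.le_sub_of_add_le_right (ENNReal.inv_ne_top.2 hC)
    ((add_le_add_right hCb _).trans hsum)

/-- Such a set has no Lebesgue density points, by the Besicovitch density theorem. -/
theorem measure_eq_zero_of_frequently_porous (μ : Measure β) [IsLocallyFiniteMeasure μ]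
    {A : Set β} (hA : MeasurableSet A) {C : ℝ≥0∞} (hC : C ≠ ∞)
    (hpor : ∀ y ∈ A, ∃ᶠ r in 𝓝[>] (0 : ℝ),
      ∃ B ⊆ closedBall y r, Disjoint A B ∧ μ (closedBall y r) ≤ C * μ B) :
    μ A = 0 := by
  by_contra hA0
  have : (ae (μ.restrict A)).NeBot := ae_neBot.2 (Measure.restrict_eq_zero.not.2 hA0)
  obtain ⟨y, hyA, hy⟩ :=
    ((ae_restrict_mem hA).and (Besicovitch.ae_tendsto_measure_inter_div μ A)).exists
  have hlt : 1 - C⁻¹ < 1 :=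
    ENNReal.sub_lt_self ENNReal.one_ne_top one_ne_zero (ENNReal.inv_ne_zero.2 hC)
  obtain ⟨r, ⟨B, hBy, hAB, hCB⟩, hr⟩ :=
    ((hpor y hyA).and_eventually (hy (Ioi_mem_nhds hlt))).exists
  -- a positive ratio rules out the junk cases `μ (closedBall y r) = 0` and `= ∞`
  have hpos : μ (A ∩ closedBall y r) / μ (closedBall y r) ≠ 0 := (zero_le.trans_lt hr).ne'
  have hM' : μ (closedBall y r) ≠ ∞ := fun h => hpos (by simp [h])
  have hM : μ (closedBall y r) ≠ 0 := fun h =>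
    hpos (by simp [measure_mono_null inter_subset_right h])
  have hsum : μ (A ∩ closedBall y r) + μ B ≤ μ (closedBall y r) := by
    rw [← measure_union' (hAB.mono_left inter_subset_left) (hA.inter measurableSet_closedBall)]
    exact measure_mono (union_subset inter_subset_right hBy)
  exact hr.not_ge (ENNReal.div_le_one_sub_inv_of_add_le hM hM' hsum hCB)

end Density

section Doubling

variable {E : Type*} [PseudoMetricSpace E] [MeasurableSpace E]

def IsDoublingUpToBoundary (m : Measure E) (Ω : Set E) (c : ℝ≥0∞) : Prop :=
  ∀ X ∈ closure Ω, ∀ r : ℝ, 0 < r →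
    0 < m (ball X r ∩ Ω) ∧ m (ball X r ∩ Ω) < ∞ ∧ m (ball X (2 * r) ∩ Ω) ≤ c * m (ball X r ∩ Ω)

namespace IsDoublingUpToBoundary

variable {m : Measure E} {Ω : Set E} {c : ℝ≥0∞}

theorem measure_ball_two_pow_mul_le (hm : IsDoublingUpToBoundary m Ω c) {X : E}
    (hX : X ∈ closure Ω) {r : ℝ} (hr : 0 < r) (k : ℕ) :
    m (ball X (2 ^ k * r) ∩ Ω) ≤ c ^ k * m (ball X r ∩ Ω) := by
  induction k with
  | zero => simp
  | succ k ih =>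
    calc m (ball X (2 ^ (k + 1) * r) ∩ Ω) = m (ball X (2 * (2 ^ k * r)) ∩ Ω) := by ring_nf
      _ ≤ c * m (ball X (2 ^ k * r) ∩ Ω) := (hm X hX _ (by positivity)).2.2
      _ ≤ c * (c ^ k * m (ball X r ∩ Ω)) := by gcongr
      _ = c ^ (k + 1) * m (ball X r ∩ Ω) := by ring

theorem isLocallyFiniteMeasure_restrict [OpensMeasurableSpace E]
    (hm : IsDoublingUpToBoundary m Ω c) : IsLocallyFiniteMeasure (m.restrict Ω) := by
  refine ⟨fun p => ?_⟩
  by_cases hp : p ∈ closure Ω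
  · refine ⟨ball p 1, ball_mem_nhds p one_pos, ?_⟩
    rw [Measure.restrict_apply measurableSet_ball]
    exact (hm p hp 1 one_pos).2.1
  · refine ⟨(closure Ω)ᶜ, isClosed_closure.isOpen_compl.mem_nhds hp, ?_⟩
    rw [Measure.restrict_apply isClosed_closure.isOpen_compl.measurableSet,
      (disjoint_compl_left.mono_right subset_closure).inter_eq, measure_empty]
    exact ENNReal.zero_lt_top

end IsDoublingUpToBoundary

end Doubling

section LevelSets

variable {E : Type*} [NormedAddCommGroup E] [NormedSpace ℝ E] [FiniteDimensional ℝ E]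
  [MeasurableSpace E] [BorelSpace E] {m : Measure E} {Ω : Set E} {c : ℝ≥0∞}

/-- The level sets of the distance to `∂Ω` are porous. -/
theorem IsDoublingUpToBoundary.measure_setOf_infDist_frontier_eq_inter_eq_zero
    (hm : IsDoublingUpToBoundary m Ω c) (hc : c ≠ ∞) (hΩ : IsOpen Ω)
    (hfr : (frontier Ω).Nonempty) (t : ℝ) :
    m ({Y | infDist Y (frontier Ω) = t} ∩ Ω) = 0 := by
  have := hm.isLocallyFiniteMeasure_restrict
  set A := {Y | infDist Y (frontier Ω) = t} ∩ Ω
  have hA : MeasurableSet A := (measurableSet_eq_fun (continuous_infDist_pt _).measurable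
    measurable_const).inter hΩ.measurableSet
  rw [← Measure.restrict_eq_self m inter_subset_right]
  refine measure_eq_zero_of_frequently_porous _ hA (ENNReal.pow_ne_top hc (n := 4)) fun y hy => ?_
  obtain ⟨rfl, hyΩ⟩ := hy
  have hpos : 0 < infDist y (frontier Ω) :=
    (isClosed_frontier.notMem_iff_infDist_pos hfr).1 fun h => (hΩ.frontier_eq ▸ h).2 hyΩ
  refine (Filter.Eventually.frequently (Ioo_mem_nhdsGT hpos)).mono fun r ⟨hr, hrt⟩ => ?_
  obtain ⟨z, hzy, hz⟩ := exists_forall_ball_infDist_lt hfr hr hrt.le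
  have hzΩ : z ∈ closure Ω := subset_closure <| ball_infDist_frontier_subset hyΩ <| by
    rw [mem_ball, hzy]; linarith
  refine ⟨ball z (r / 8), fun w hw => ?_, ?_, ?_⟩
  · rw [mem_ball] at hw
    rw [mem_closedBall]
    linarith [dist_triangle w z y]
  · exact disjoint_left.2 fun w hwA hw => (hz w hw).ne hwA.1
  · rw [Measure.restrict_apply measurableSet_closedBall, Measure.restrict_apply measurableSet_ball]
    calc m (closedBall y r ∩ Ω) ≤ m (ball z (2 ^ 4 * (r / 8)) ∩ Ω) := by
          refine measure_mono (inter_subset_inter_left _ fun w hw => ?_)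
          rw [mem_closedBall] at hw
          rw [mem_ball]
          linarith [dist_triangle w y z, dist_comm z y]
      _ ≤ c ^ 4 * m (ball z (r / 8) ∩ Ω) :=
          hm.measure_ball_two_pow_mul_le hzΩ (by positivity) 4

end LevelSets

section Semicontinuity

theorem lowerSemicontinuousAt_lintegral {X α : Type*} [TopologicalSpace X] [MeasurableSpace α]
    {μ : Measure α} {f : X → α → ℝ≥0∞} {x : X} [(𝓝 x).IsCountablyGenerated]
    (hf : ∀ z, AEMeasurable (f z) μ) (h : ∀ᵐ a ∂μ, LowerSemicontinuousAt (fun z => f z a) x) :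
    LowerSemicontinuousAt (fun z => ∫⁻ a, f z a ∂μ) x := by
  rw [lowerSemicontinuousAt_iff_le_liminf]
  calc ∫⁻ a, f x a ∂μ ≤ ∫⁻ a, liminf (fun z => f z a) (𝓝 x) ∂μ :=
        lintegral_mono_ae (h.mono fun a ha => ha.le_liminf)
    _ ≤ liminf (fun z => ∫⁻ a, f z a ∂μ) (𝓝 x) := lintegral_liminf_le' hf

variable {E : Type*} [PseudoMetricSpace E] [MeasurableSpace E] [OpensMeasurableSpace E]
  {μ : Measure E}

theorem ae_measure_sphere_eq_zero_of_measure_preimage_eq_zero [SFinite μ] (x : E) {ρ : E → ℝ}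
    (hρ : ∀ t, μ (ρ ⁻¹' {t}) = 0) : ∀ᵐ Y ∂μ, μ (sphere x (ρ Y)) = 0 := by
  set T := {t : ℝ | 0 < μ (sphere x t)}
  have hT : T.Countable :=
    Measure.countable_meas_pos_of_disjoint_iUnion (fun _ => isClosed_sphere.measurableSet)
      fun t t' htt' => disjoint_left.2 fun z hz hz' => htt' (hz.symm.trans hz')
  rw [ae_iff]
  refine measure_mono_null (fun Y hY => mem_biUnion (show ρ Y ∈ T from pos_iff_ne_zero.2 hY) rfl)
    ((measure_biUnion_null_iff hT).2 fun t _ => hρ t)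

theorem upperSemicontinuousAt_measure_ball {x : E} {r : ℝ} (hsph : μ (sphere x r) = 0)
    (hfin : ∃ R > r, μ (ball x R) ≠ ∞) : UpperSemicontinuousAt (fun z => μ (ball z r)) x := by
  intro D hD
  have hcl : μ (closedBall x r) = μ (ball x r) := by
    refine le_antisymm ?_ (measure_mono ball_subset_closedBall)
    calc μ (closedBall x r) = μ (ball x r ∪ sphere x r) := by rw [ball_union_sphere]
      _ ≤ μ (ball x r) + μ (sphere x r) := measure_union_le _ _
      _ = μ (ball x r) := by rw [hsph, add_zero]
  have hlim : Tendsto (fun R => μ (ball x R)) (𝓝[>] r) (𝓝 (μ (closedBall x r))) := by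
    rw [← biInter_gt_ball]
    exact tendsto_measure_biInter_gt (fun _ _ => measurableSet_ball.nullMeasurableSet)
      (fun _ _ _ hRR' => ball_subset_ball hRR') hfin
  have hD' : μ (closedBall x r) < D := by rw [hcl]; exact hD
  obtain ⟨R, hRD, hrR⟩ :=
    ((hlim.eventually (eventually_lt_nhds hD')).and self_mem_nhdsWithin).exists
  filter_upwards [ball_mem_nhds x (sub_pos.2 hrR)] with z hz
  refine (measure_mono (ball_subset_ball' ?_)).trans_lt hRD
  rw [mem_ball] at hz
  linarith

theorem lowerSemicontinuousAt_div_measure_ball (N : ℝ≥0∞) {x : E} {r : ℝ}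
    (hsph : μ (sphere x r) = 0) (hfin : ∃ R > r, μ (ball x R) ≠ ∞) :
    LowerSemicontinuousAt (fun z => N / μ (ball z r)) x := by
  obtain ⟨R, hrR, hR⟩ := hfin
  have hball : μ (ball x r) ≠ ∞ := ne_top_of_le_ne_top hR (measure_mono (ball_subset_ball hrR.le))
  have hcont : ContinuousAt (fun t : ℝ≥0∞ => N * t⁻¹) (μ (ball x r)) :=
    (ENNReal.continuousAt_const_mul (Or.inr (ENNReal.inv_ne_zero.2 hball))).comp
      continuous_inv.continuousAt
  exact hcont.comp_upperSemicontinuousAt_antitone (f := fun z => μ (ball z r))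
    (upperSemicontinuousAt_measure_ball hsph ⟨R, hrR, hR⟩)
    fun _ _ hab => ENNReal.div_le_div_left hab N

end Semicontinuity

section SquareFunction

variable {n : ℕ} {Ω : Set (EuclideanSpace ℝ (Fin (n + 1)))}
  {m : Measure (EuclideanSpace ℝ (Fin (n + 1)))} {c : ℝ≥0∞} {α : ℝ}
  {F : EuclideanSpace ℝ (Fin (n + 1)) → ℝ≥0∞}

def sqFnIntegrand (Ω : Set (EuclideanSpace ℝ (Fin (n + 1))))
    (m : Measure (EuclideanSpace ℝ (Fin (n + 1)))) (F : EuclideanSpace ℝ (Fin (n + 1)) → ℝ≥0∞)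
    (x Y : EuclideanSpace ℝ (Fin (n + 1))) : ℝ≥0∞ :=
  F Y ^ 2 * ENNReal.ofReal (bdist Ω Y) ^ 2 / m (ball x (bdist Ω Y) ∩ Ω)

theorem measurable_sqFnIntegrand (hF : Measurable F) (x : EuclideanSpace ℝ (Fin (n + 1))) :
    Measurable (sqFnIntegrand Ω m F x) := by
  have hbdist : Measurable (bdist Ω) := (continuous_infDist_pt (frontier Ω)).measurable
  refine ((hF.pow_const 2).mul ((ENNReal.measurable_ofReal.comp hbdist).pow_const 2)).div ?_
  exact (Monotone.measurable fun r s hrs =>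
    measure_mono (inter_subset_inter_left Ω (ball_subset_ball hrs))).comp hbdist

theorem isOpen_cone (hΩ : IsOpen Ω) (α : ℝ) (x : EuclideanSpace ℝ (Fin (n + 1))) :
    IsOpen (cone Ω α x) :=
  hΩ.inter (isOpen_lt (continuous_id.dist continuous_const)
    (continuous_const.mul (continuous_infDist_pt (frontier Ω))))

theorem eventually_mem_cone {x Y : EuclideanSpace ℝ (Fin (n + 1))} (hY : Y ∈ cone Ω α x) :
    ∀ᶠ z in 𝓝 x, Y ∈ cone Ω α z :=
  Filter.mem_of_superset (isOpen_ball.mem_nhds (mem_ball'.2 hY.2))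
    fun _ hz => ⟨hY.1, mem_ball'.1 hz⟩

theorem sqFn_eq_lintegral_indicator (hΩ : IsOpen Ω) (x : EuclideanSpace ℝ (Fin (n + 1))) :
    sqFn Ω m α F x =
      (∫⁻ Y, (cone Ω α x).indicator (sqFnIntegrand Ω m F x) Y ∂m) ^ (2⁻¹ : ℝ) := by
  rw [lintegral_indicator (isOpen_cone hΩ α x).measurableSet]
  rfl

theorem IsDoublingUpToBoundary.ae_measure_sphere_bdist_inter_eq_zero
    (hm : IsDoublingUpToBoundary m Ω c) (hc : c ≠ ∞) (hΩ : IsOpen Ω)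
    (hfr : (frontier Ω).Nonempty) (x : EuclideanSpace ℝ (Fin (n + 1))) :
    ∀ᵐ Y ∂m, Y ∈ Ω → m (sphere x (bdist Ω Y) ∩ Ω) = 0 := by
  have := hm.isLocallyFiniteMeasure_restrict
  rw [← ae_restrict_iff' hΩ.measurableSet]
  have hlevel (t : ℝ) : m.restrict Ω (bdist Ω ⁻¹' {t}) = 0 := by
    rw [Measure.restrict_apply' hΩ.measurableSet]
    exact hm.measure_setOf_infDist_frontier_eq_inter_eq_zero hc hΩ hfr t
  simpa only [Measure.restrict_apply' hΩ.measurableSet] using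
    ae_measure_sphere_eq_zero_of_measure_preimage_eq_zero x hlevel

theorem lowerSemicontinuousAt_indicator_cone_sqFnIntegrand (hm : IsDoublingUpToBoundary m Ω c)
    {x Y : EuclideanSpace ℝ (Fin (n + 1))} (hx : x ∈ closure Ω)
    (hsph : Y ∈ Ω → m (sphere x (bdist Ω Y) ∩ Ω) = 0) :
    LowerSemicontinuousAt (fun z => (cone Ω α z).indicator (sqFnIntegrand Ω m F z) Y) x := by
  intro l hl
  dsimp only at hl ⊢
  by_cases hY : Y ∈ cone Ω α x
  swap
  · rw [indicator_of_notMem hY] at hl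
    exact absurd hl ENNReal.not_lt_zero
  rw [indicator_of_mem hY] at hl
  have hbdist : 0 ≤ bdist Ω Y := infDist_nonneg
  have hfin : ∃ R > bdist Ω Y, m.restrict Ω (ball x R) ≠ ∞ :=
    ⟨bdist Ω Y + 1, by linarith, by
      rw [Measure.restrict_apply measurableSet_ball]
      exact (hm x hx _ (by linarith)).2.1.ne⟩
  have hlsc := lowerSemicontinuousAt_div_measure_ball (F Y ^ 2 * ENNReal.ofReal (bdist Ω Y) ^ 2)
    (by rw [Measure.restrict_apply isClosed_sphere.measurableSet]; exact hsph hY.1) hfin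
  simp only [Measure.restrict_apply measurableSet_ball] at hlsc
  filter_upwards [hlsc l hl, eventually_mem_cone hY] with z hz hzY
  rwa [indicator_of_mem hzY]

theorem lowerSemicontinuousAt_sqFn (hΩ : IsOpen Ω) (hfr : (frontier Ω).Nonempty)
    (hm : IsDoublingUpToBoundary m Ω c) (hc : c ≠ ∞) (hF : Measurable F)
    {x : EuclideanSpace ℝ (Fin (n + 1))} (hx : x ∈ closure Ω) :
    LowerSemicontinuousAt (sqFn Ω m α F) x := by
  have hint : LowerSemicontinuousAt
      (fun z => ∫⁻ Y, (cone Ω α z).indicator (sqFnIntegrand Ω m F z) Y ∂m) x :=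
    lowerSemicontinuousAt_lintegral
      (fun z => ((measurable_sqFnIntegrand hF z).indicator
        (isOpen_cone hΩ α z).measurableSet).aemeasurable)
      ((hm.ae_measure_sphere_bdist_inter_eq_zero hc hΩ hfr x).mono fun _ hY =>
        lowerSemicontinuousAt_indicator_cone_sqFnIntegrand hm hx hY)
  have hsqrt := (ENNReal.continuous_rpow_const (y := 2⁻¹)).continuousAt.comp_lowerSemicontinuousAt
    hint fun a b hab => ENNReal.rpow_le_rpow hab (by norm_num)
  convert hsqrt using 1
  exact funext fun z => sqFn_eq_lintegral_indicator hΩ z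

end SquareFunction

theorem statement6_general {n : ℕ} (Ω : Set (EuclideanSpace ℝ (Fin (n + 1))))
    (hΩ : IsOpen Ω) (hfr : (frontier Ω).Nonempty)
    (m : Measure (EuclideanSpace ℝ (Fin (n + 1)))) (c₄ : ℝ≥0∞)
    (hc₄' : c₄ < ∞)
    -- m is doubling up to the boundary with constant c₄
    (hm : ∀ X ∈ closure Ω, ∀ r : ℝ, 0 < r →
      0 < m (ball X r ∩ Ω) ∧ m (ball X r ∩ Ω) < ∞ ∧
        m (ball X (2 * r) ∩ Ω) ≤ c₄ * m (ball X r ∩ Ω))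
    (α β : ℝ)
    (F : EuclideanSpace ℝ (Fin (n + 1)) → ℝ≥0∞) (hF : Measurable F) :
    (∀ x ∈ frontier Ω, ∀ l : ℝ≥0∞, 0 < l →
      sqFn Ω m β F x < ∞ → l < sqFn Ω m α F x →
        ∃ ε : ℝ, 0 < ε ∧ ∀ y ∈ frontier Ω, dist y x < ε → l < sqFn Ω m α F y) ∧
    ((∀ x ∈ frontier Ω, sqFn Ω m β F x < ∞) → ∀ l : ℝ≥0∞, 0 < l →
      ∃ U : Set (EuclideanSpace ℝ (Fin (n + 1))), IsOpen U ∧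
        {x ∈ frontier Ω | l < sqFn Ω m α F x} = U ∩ frontier Ω) := by
  have hlsc (x) (hx : x ∈ frontier Ω) : LowerSemicontinuousAt (sqFn Ω m α F) x :=
    lowerSemicontinuousAt_sqFn hΩ hfr hm hc₄'.ne hF (frontier_subset_closure hx)
  refine ⟨fun x hx l _ _ hl => ?_, fun _ l _ => ?_⟩
  · obtain ⟨ε, hε, h⟩ := Metric.eventually_nhds_iff.1 (hlsc x hx l hl)
    exact ⟨ε, hε, fun y _ hy => h hy⟩
  · obtain ⟨U, hU, hUeq⟩ := lowerSemicontinuousOn_iff_preimage_Ioi.1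
      (fun x hx => (hlsc x hx).lowerSemicontinuousWithinAt _) l
    exact ⟨U, hU, hUeq.trans (inter_comm _ _)⟩

/-- lower semicontinuity-type openness of superlevel sets of the
conical square function: if `S^β F(x) < ∞` and `S^α F(x) > l` (with `α < β`),
then `S^α F > l` on a relative neighborhood of `x` in `∂Ω`; in particular, if
`S^β F < ∞` everywhere on `∂Ω`, then `{S^α F > l}` is relatively open in `∂Ω`. -/
theorem statement6 {n : ℕ} (Ω : Set (EuclideanSpace ℝ (Fin (n + 1))))
    (hΩ : IsOpen Ω) (hΩne : Ω.Nonempty) (hfr : (frontier Ω).Nonempty)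
    (m : Measure (EuclideanSpace ℝ (Fin (n + 1)))) (c₄ : ℝ≥0∞) (hc₄ : 1 ≤ c₄)
    (hc₄' : c₄ < ∞)
    -- m is doubling up to the boundary with constant c₄
    (hm : ∀ X ∈ closure Ω, ∀ r : ℝ, 0 < r →
      0 < m (ball X r ∩ Ω) ∧ m (ball X r ∩ Ω) < ∞ ∧
        m (ball X (2 * r) ∩ Ω) ≤ c₄ * m (ball X r ∩ Ω))
    (α β : ℝ) (hα : 0 < α) (hαβ : α < β)
    (F : EuclideanSpace ℝ (Fin (n + 1)) → ℝ≥0∞) (hF : Measurable F) :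
    (∀ x ∈ frontier Ω, ∀ l : ℝ≥0∞, 0 < l →
      sqFn Ω m β F x < ∞ → l < sqFn Ω m α F x →
        ∃ ε : ℝ, 0 < ε ∧ ∀ y ∈ frontier Ω, dist y x < ε → l < sqFn Ω m α F y) ∧
    ((∀ x ∈ frontier Ω, sqFn Ω m β F x < ∞) → ∀ l : ℝ≥0∞, 0 < l →
      ∃ U : Set (EuclideanSpace ℝ (Fin (n + 1))), IsOpen U ∧
        {x ∈ frontier Ω | l < sqFn Ω m α F x} = U ∩ frontier Ω) :=
  statement6_general Ω hΩ hfr m c₄ hc₄' hm α β F hF
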